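/- Let μ > 0 and let M ≥ 1 be an integer. For l ∈ {0, 1, …, M−1} set α_l = √μ·e^{2πil/M}. Then for all m, n, m', n' ∈ ℕ: (1/M)·Σ_{l=0}^{M−1} c_{α_l}(m)·c_{α_l}(n)·conj(c_{α_l}(m')·c_{α_l}(n')) = Σ_{j=0}^{M−1} \tildeP_{j|2μ}·g_{j,2μ}(m,n)·g_{j,2μ}(m',n'). (That is, a pair of identical coherent states of intensity μ each, whose common phase is uniformly randomized over the M-th roots of unity, has density operator equal to the mixture Σ_{j=0}^{M−1} \tildeP_{j|2μ} |ĵ_{2μ}⟩⟨ĵ_{2μ}| of the states with coefficients g_{j,2μ}.) -/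

import Mathlib

/-- Coherent-state coefficient: `c_α(n) = e^{−|α|²/2} α^n / √(n!)`. -/
noncomputable def coherentCoeff (α : ℂ) (n : ℕ) : ℂ :=
  Complex.exp (-(‖α‖ : ℂ) ^ 2 / 2) * α ^ n / (Real.sqrt (Nat.factorial n) : ℂ)

/-- Poisson probability with mean `lam`: `P_{j|lam} = e^{−lam} lam^j / j!`. -/
noncomputable def poisson (lam : ℝ) (j : ℕ) : ℝ :=
  Real.exp (-lam) * lam ^ j / (Nat.factorial j : ℝ)

/-- `tildeP M lam j = Σ_{n=0}^∞ P_{j+Mn|lam}`. -/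
noncomputable def tildeP (M : ℕ) (lam : ℝ) (j : ℕ) : ℝ :=
  ∑' n : ℕ, poisson lam (j + M * n)

/-- Two-mode coefficients of the state `|ĵ_lam⟩`:
`g_{j,lam}(m,n) = √(P_{m+n|lam}/tildeP_{j|lam}) √((m+n)!/(2^{m+n} m! n!))` if
`m+n ≡ j (mod M)`, and `0` otherwise. -/
noncomputable def g (M : ℕ) (lam : ℝ) (j : ℕ) (p : ℕ × ℕ) : ℝ :=
  if (p.1 + p.2) % M = j % M then
    Real.sqrt (poisson lam (p.1 + p.2) / tildeP M lam j)
      * Real.sqrt ((Nat.factorial (p.1 + p.2) : ℝ)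
          / (2 ^ (p.1 + p.2) * Nat.factorial p.1 * Nat.factorial p.2))
  else 0

/-! With `ζ = exp(2πi/M)` we have `α_l = √μ ζ^l`, and since `|ζ^l| = 1` each matrix element
`c(m) c(n) conj(c(m') c(n'))` is the same real number as for `α = √μ`, times the phase
`(ζ^d)^l` with `d = (m + n) - (m' + n')`. Averaging over `l` keeps exactly the elements with
`m + n ≡ m' + n' (mod M)`. On the other side, `√(P_{a+b|2μ}) √((a+b)!/(2^{a+b} a! b!))` is
`c_{√μ}(a) c_{√μ}(b)` (the binomial splitting of a coherent state of intensity `2μ`), so the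
weight `tildeP_j` cancels against the normalisation of `g_j`, and only the class
`j = (m + n) mod M` contributes. -/

open Finset ComplexConjugate

theorem IsPrimitiveRoot.sum_range_zpow_pow {K : Type*} [Field K] {ζ : K} {M : ℕ}
    (hζ : IsPrimitiveRoot ζ M) (d : ℤ) :
    ∑ l ∈ range M, (ζ ^ d) ^ l = if (M : ℤ) ∣ d then (M : K) else 0 := by
  by_cases hd : (M : ℤ) ∣ d
  · simp [hd, (hζ.zpow_eq_one_iff_dvd d).2 hd]
  · have hpow : (ζ ^ d) ^ M = 1 := by rw [← zpow_natCast, ← zpow_mul, mul_comm, zpow_mul,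
      zpow_natCast, hζ.pow_eq_one, one_zpow]
    rw [geom_sum_eq (mt (hζ.zpow_eq_one_iff_dvd d).1 hd), hpow, if_neg hd, sub_self, zero_div]

theorem coherentCoeff_mul_of_norm_eq_one (z : ℂ) {u : ℂ} (hu : ‖u‖ = 1) (k : ℕ) :
    coherentCoeff (z * u) k = coherentCoeff z k * u ^ k := by
  simp only [coherentCoeff, norm_mul, hu, mul_one, mul_pow]
  ring

theorem coherentCoeff_pair_mul_conj_of_norm_eq_one (z : ℂ) {u : ℂ} (hu : ‖u‖ = 1)
    (m n m' n' : ℕ) :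
    coherentCoeff (z * u) m * coherentCoeff (z * u) n
        * conj (coherentCoeff (z * u) m' * coherentCoeff (z * u) n') =
      coherentCoeff z m * coherentCoeff z n * conj (coherentCoeff z m' * coherentCoeff z n')
        * u ^ ((m + n : ℤ) - (m' + n' : ℤ)) := by
  have hu0 : u ≠ 0 := norm_ne_zero_iff.1 (by rw [hu]; exact one_ne_zero)
  simp only [coherentCoeff_mul_of_norm_eq_one z hu, map_mul, map_pow,
    ← Complex.inv_eq_conj hu, zpow_sub₀ hu0, inv_pow]
  norm_cast
  simp only [pow_add]
  field_simp

noncomputable def coherentAmp (r : ℝ) (k : ℕ) : ℝ :=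
  Real.exp (-r ^ 2 / 2) * r ^ k / Real.sqrt (Nat.factorial k)

theorem coherentCoeff_ofReal (r : ℝ) (k : ℕ) : coherentCoeff r k = coherentAmp r k := by
  simp only [coherentCoeff, coherentAmp, Complex.norm_real, Real.norm_eq_abs,
    ← Complex.ofReal_pow, sq_abs]
  push_cast
  ring

theorem poisson_nonneg {lam : ℝ} (hlam : 0 ≤ lam) (j : ℕ) : 0 ≤ poisson lam j := by
  unfold poisson; positivity

theorem summable_poisson (lam : ℝ) : Summable (poisson lam) :=
  ((Real.summable_pow_div_factorial lam).mul_left (Real.exp (-lam))).congr fun k => by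
    unfold poisson; ring

theorem tildeP_pos {lam : ℝ} (hlam : 0 < lam) {M : ℕ} (hM : M ≠ 0) (j : ℕ) :
    0 < tildeP M lam j := by
  have hinj : Function.Injective fun n : ℕ => j + M * n := fun a b hab =>
    Nat.eq_of_mul_eq_mul_left (Nat.pos_of_ne_zero hM) (Nat.add_left_cancel hab)
  refine ((summable_poisson lam).comp_injective hinj).tsum_pos
    (fun n => poisson_nonneg hlam.le _) 0 ?_
  show 0 < poisson lam (j + M * 0)
  unfold poisson; positivity

theorem sqrt_poisson_mul_sqrt_binomial {μ : ℝ} (hμ : 0 ≤ μ) (a b : ℕ) :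
    Real.sqrt (poisson (2 * μ) (a + b))
        * Real.sqrt ((Nat.factorial (a + b) : ℝ)
          / (2 ^ (a + b) * Nat.factorial a * Nat.factorial b)) =
      coherentAmp (Real.sqrt μ) a * coherentAmp (Real.sqrt μ) b := by
  rw [← Real.sqrt_mul (poisson_nonneg (by positivity) _), Real.sqrt_eq_iff_eq_sq
    (mul_nonneg (poisson_nonneg (by positivity) _) (by positivity))
    (by unfold coherentAmp; positivity)]
  have hexp : Real.exp (-Real.sqrt μ ^ 2 / 2) ^ 4 = Real.exp (-(2 * μ)) := by
    rw [← Real.exp_nat_mul, Real.sq_sqrt hμ]; ring_nf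
  have hfa : (0 : ℝ) < Nat.factorial a := by positivity
  have hfb : (0 : ℝ) < Nat.factorial b := by positivity
  unfold poisson coherentAmp
  rw [← hexp]
  simp only [div_pow, mul_pow, Real.sq_sqrt hfa.le, Real.sq_sqrt hfb.le, ← pow_mul]
  rw [mul_comm a, mul_comm b, pow_mul, pow_mul, Real.sq_sqrt hμ]
  field_simp
  ring

theorem g_two_mul_eq_ite {μ : ℝ} (hμ : 0 ≤ μ) (M j a b : ℕ) :
    g M (2 * μ) j (a, b) =
      if (a + b) % M = j % M then
        coherentAmp (Real.sqrt μ) a * coherentAmp (Real.sqrt μ) b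
          / Real.sqrt (tildeP M (2 * μ) j)
      else 0 := by
  simp only [g]
  split_ifs
  · rw [Real.sqrt_div (poisson_nonneg (by positivity) _), div_mul_eq_mul_div,
      sqrt_poisson_mul_sqrt_binomial hμ]
  · rfl

theorem sum_tildeP_mul_g_mul_g {μ : ℝ} (hμ : 0 < μ) {M : ℕ} (hM : M ≠ 0) (m n m' n' : ℕ) :
    ∑ j ∈ range M, tildeP M (2 * μ) j * g M (2 * μ) j (m, n) * g M (2 * μ) j (m', n') =
      if (m + n) % M = (m' + n') % M then
        coherentAmp (Real.sqrt μ) m * coherentAmp (Real.sqrt μ) n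
          * (coherentAmp (Real.sqrt μ) m' * coherentAmp (Real.sqrt μ) n')
      else 0 := by
  have hj₀ : (m + n) % M % M = (m + n) % M := Nat.mod_mod _ _
  rw [sum_eq_single_of_mem ((m + n) % M) (mem_range.2 (Nat.mod_lt _ (Nat.pos_of_ne_zero hM)))]
  · have hT := tildeP_pos (by positivity : 0 < 2 * μ) hM ((m + n) % M)
    rw [g_two_mul_eq_ite hμ.le, g_two_mul_eq_ite hμ.le, hj₀, if_pos rfl]
    by_cases h : (m + n) % M = (m' + n') % M
    · rw [if_pos h.symm, if_pos h]
      field_simp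
      rw [Real.sq_sqrt hT.le]
      ring
    · rw [if_neg (Ne.symm h), if_neg h, mul_zero]
  · intro j hj hne
    have hjM : (m + n) % M ≠ j % M := by rwa [Nat.mod_eq_of_lt (mem_range.1 hj), ne_comm]
    rw [g_two_mul_eq_ite hμ.le, if_neg hjM, mul_zero, zero_mul]

/-- A pair of identical coherent states of intensity `μ` each, with common phase
uniformly randomized over the `M`-th roots of unity, has density operator equal to the
mixture `Σ_{j=0}^{M−1} tildeP_{j|2μ} |ĵ_{2μ}⟩⟨ĵ_{2μ}|`, entrywise in the
photon-number basis. -/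
theorem discrete_phase_randomized_pair_decomposition (μ : ℝ) (hμ : 0 < μ)
    (M : ℕ) (hM : 1 ≤ M) (α : ℕ → ℂ)
    (hα : ∀ l, α l = (Real.sqrt μ : ℂ)
      * Complex.exp (2 * Real.pi * l / M * Complex.I)) (m n m' n' : ℕ) :
    (1 / (M : ℂ)) * ∑ l ∈ Finset.range M,
        coherentCoeff (α l) m * coherentCoeff (α l) n
          * (starRingEnd ℂ) (coherentCoeff (α l) m' * coherentCoeff (α l) n') =
      ((∑ j ∈ Finset.range M,
          tildeP M (2 * μ) j * g M (2 * μ) j (m, n) * g M (2 * μ) j (m', n') : ℝ) : ℂ) := by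
  have hM₀ : M ≠ 0 := by omega
  set ζ := Complex.exp (2 * Real.pi * Complex.I / M)
  have hζ : IsPrimitiveRoot ζ M := Complex.isPrimitiveRoot_exp M hM₀
  have hα_pow : ∀ l : ℕ, α l = (Real.sqrt μ : ℂ) * ζ ^ l := fun l => by
    rw [hα, ← Complex.exp_nat_mul]; ring_nf
  have hterm : ∀ l : ℕ, coherentCoeff (α l) m * coherentCoeff (α l) n
      * conj (coherentCoeff (α l) m' * coherentCoeff (α l) n') =
        coherentCoeff (Real.sqrt μ) m * coherentCoeff (Real.sqrt μ) n
          * conj (coherentCoeff (Real.sqrt μ) m' * coherentCoeff (Real.sqrt μ) n')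
          * (ζ ^ ((m + n : ℤ) - (m' + n' : ℤ))) ^ l := fun l => by
    rw [hα_pow, coherentCoeff_pair_mul_conj_of_norm_eq_one _
      (by rw [norm_pow, hζ.norm'_eq_one hM₀, one_pow]), ← zpow_natCast, ← zpow_natCast,
      ← zpow_mul, ← zpow_mul, mul_comm (l : ℤ)]
  have hdvd : (M : ℤ) ∣ (m + n : ℤ) - (m' + n' : ℤ) ↔ (m + n) % M = (m' + n') % M := by
    rw [eq_comm]; exact_mod_cast Nat.modEq_iff_dvd.symm
  rw [sum_congr rfl fun l _ => hterm l, ← mul_sum, hζ.sum_range_zpow_pow,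
    sum_tildeP_mul_g_mul_g hμ hM₀]
  simp only [coherentCoeff_ofReal, ← Complex.ofReal_mul, Complex.conj_ofReal]
  by_cases h : (m + n) % M = (m' + n') % M
  · rw [if_pos (hdvd.2 h), if_pos h]
    field_simp
  · rw [if_neg (mt hdvd.1 h), if_neg h, mul_zero, mul_zero, Complex.ofReal_zero]
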